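/- Let Σ = {a, b, c} and let ~ be the smallest congruence on Σ* such that ab ~ ba and ac ~ ca (i.e., the letter a commutes with b and with c, while b and c do not commute). For w ∈ Σ*, let N(w) denote the signed number of factorizations of w into factors from {a, b, c, ba, ca}: N(w) = Σ (−1)^{#{i : uᵢ ∈ {ba, ca}}}, the sum ranging over all finite sequences (u₁, …, u_k) of words with each uᵢ ∈ {a, b, c, ba, ca} and u₁⋯u_k = w. Then N(w) ∈ {0, 1} for every w ∈ Σ*, and every ~-equivalence class of Σ* contains exactly one word w with N(w) = 1. -/

import Mathlib

/-- The three-letter alphabet `{a, b, c}`. -/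
inductive ABC : Type
  | a
  | b
  | c
deriving DecidableEq

open ABC

/-- One swap of an adjacent commuting pair: `a` commutes with `b` and with `c`. -/
inductive CommStep : List ABC → List ABC → Prop
  | swap_ab (u v : List ABC) : CommStep (u ++ a :: b :: v) (u ++ b :: a :: v)
  | swap_ac (u v : List ABC) : CommStep (u ++ a :: c :: v) (u ++ c :: a :: v)

/-- The smallest congruence `~` on `Σ*` with `ab ~ ba` and `ac ~ ca`:
the equivalence relation generated by swaps of adjacent commuting pairs. -/
def traceEquiv : List ABC → List ABC → Prop :=
  Relation.EqvGen CommStep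

/-- `N(w)`: the signed number of factorizations of `w` into factors from
`{a, b, c, ba, ca}`, a factorization counting with sign
`(-1)^(number of factors in {ba, ca})`. -/
noncomputable def signedFactorCount (w : List ABC) : ℤ :=
  ∑ᶠ l ∈ {l : List (List ABC) |
      (∀ u ∈ l, u = [a] ∨ u = [b] ∨ u = [c] ∨ u = [b, a] ∨ u = [c, a]) ∧
        l.flatten = w},
    (-1 : ℤ) ^ (l.countP (fun u => u = [b, a] ∨ u = [c, a]))

/-!
Grouping the factorizations of a word by their first factor gives `N(a t) = N(t)`,
`N(x a t) = N(a t) - N(t) = 0` and `N(x y t) = N(y t)` for `x, y ∈ {b, c}`, so `N` is the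
indicator function of `a* {b, c}*`. Each trace contains exactly one word of this shape: the
number of `a`s and the word left after erasing the `a`s are invariants of `~`, and `w` is
equivalent to the word that lists its `a`s first, because an `a` commutes with every other
letter.
-/

theorem Relation.EqvGen.map {α β : Type*} {r : α → α → Prop} {s : β → β → Prop} (f : α → β)
    (hf : ∀ x y, r x y → s (f x) (f y)) {x y : α} (h : Relation.EqvGen r x y) :
    Relation.EqvGen s (f x) (f y) := by
  induction h with
  | rel x y h => exact .rel _ _ (hf x y h)
  | refl => exact .refl _
  | symm _ _ _ ih => exact .symm _ _ ih
  | trans _ _ _ _ _ ih₁ ih₂ => exact .trans _ _ _ ih₁ ih₂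

section Factorizations

variable {α : Type*} {P : List α → Prop}

theorem List.append_eq_iff_prefix {u v w : List α} : u ++ v = w ↔ u <+: w ∧ v = w.drop u.length :=
  ⟨by rintro rfl; simp, fun ⟨hu, hv⟩ => hv ▸ List.prefix_iff_eq_append.1 hu⟩

def factorizations (P : List α → Prop) (w : List α) : Set (List (List α)) :=
  {l | (∀ u ∈ l, P u) ∧ l.flatten = w}

theorem factorizations_nil (hP : ¬P []) : factorizations P [] = {[]} := by
  ext l
  simp only [factorizations, List.flatten_eq_nil_iff, Set.mem_ofPred_eq, Set.mem_singleton_iff]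
  refine ⟨fun ⟨hl, hnil⟩ => List.eq_nil_iff_forall_not_mem.2 fun u hu => ?_, by rintro rfl; simp⟩
  exact hP (hnil u hu ▸ hl u hu)

theorem factorizations_eq_biUnion {w : List α} (hw : w ≠ []) :
    factorizations P w =
      ⋃ u ∈ {u | P u ∧ u <+: w}, (u :: ·) '' factorizations P (w.drop u.length) := by
  ext l
  cases l with
  | nil => simp [factorizations, hw.symm]
  | cons u l =>
    simp [factorizations, List.append_eq_iff_prefix]
    tauto

theorem finite_factorizations (hP : ¬P []) (w : List α) : (factorizations P w).Finite := by
  rcases eq_or_ne w [] with rfl | hw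
  · simp [factorizations_nil hP]
  rw [factorizations_eq_biUnion hw]
  refine (w.inits.finite_toSet.subset fun u hu => ?_).biUnion fun u hu => ?_
  · simpa using hu.2
  · exact (finite_factorizations hP _).image _
termination_by w.length
decreasing_by
  have hu₀ : 0 < u.length := List.length_pos_iff.2 fun h => hP (h ▸ hu.1)
  have := hu.2.length_le
  simp only [List.length_drop]
  omega

theorem finsum_mem_factorizations {M : Type*} [AddCommMonoid M] (f : List (List α) → M)
    (hP : ¬P []) {w : List α} (hw : w ≠ []) :
    ∑ᶠ l ∈ factorizations P w, f l =
      ∑ᶠ u ∈ {u | P u ∧ u <+: w}, ∑ᶠ l ∈ factorizations P (w.drop u.length), f (u :: l) := by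
  rw [factorizations_eq_biUnion hw, finsum_mem_biUnion]
  · exact finsum_mem_congr rfl fun u _ => finsum_mem_image List.cons_injective.injOn
  · intro u _ v _ huv
    exact Set.disjoint_left.2 fun l ⟨_, _, hl⟩ ⟨_, _, hl'⟩ => huv (List.cons.inj (hl.trans hl'.symm)).1
  · exact w.inits.finite_toSet.subset fun u hu => by simpa using hu.2
  · exact fun u _ => (finite_factorizations hP _).image _

end Factorizations

def IsFactor (u : List ABC) : Prop :=
  u = [a] ∨ u = [b] ∨ u = [c] ∨ u = [b, a] ∨ u = [c, a]

def factorSign (u : List ABC) : ℤ :=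
  if u = [b, a] ∨ u = [c, a] then -1 else 1

theorem signedFactorCount_nil : signedFactorCount [] = 1 := by
  rw [signedFactorCount, ← factorizations, factorizations_nil (by simp)]
  simp

theorem signedFactorCount_cons (x : ABC) (t : List ABC) :
    signedFactorCount (x :: t) = ∑ᶠ u ∈ {u | IsFactor u ∧ u <+: x :: t},
      factorSign u * signedFactorCount ((x :: t).drop u.length) := by
  rw [signedFactorCount, ← factorizations, finsum_mem_factorizations _ (by simp) (by simp)]
  refine finsum_mem_congr rfl fun u _ => ?_
  rw [signedFactorCount, ← factorizations, mul_finsum_mem]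
  refine finsum_mem_congr rfl fun l _ => ?_
  simp only [List.countP_cons, pow_add, factorSign]
  split_ifs <;> simp_all

theorem signedFactorCount_a_cons (t : List ABC) :
    signedFactorCount (a :: t) = signedFactorCount t := by
  have : {u | IsFactor u ∧ u <+: a :: t} = {[a]} := by
    ext u; simp [IsFactor]; aesop
  rw [signedFactorCount_cons, this, finsum_mem_singleton]
  simp [factorSign]

theorem signedFactorCount_cons_a_cons {x : ABC} (hx : x ≠ a) (t : List ABC) :
    signedFactorCount (x :: a :: t) = 0 := by
  have : {u | IsFactor u ∧ u <+: x :: a :: t} = {[x], [x, a]} := by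
    ext u; cases x <;> simp [IsFactor] at * <;> aesop
  rw [signedFactorCount_cons, this, finsum_mem_pair (by simp)]
  cases x <;> simp_all [factorSign, signedFactorCount_a_cons]

theorem signedFactorCount_cons_of_ne {x y : ABC} (hx : x ≠ a) (hy : y ≠ a) (t : List ABC) :
    signedFactorCount (x :: y :: t) = signedFactorCount (y :: t) := by
  have : {u | IsFactor u ∧ u <+: x :: y :: t} = {[x]} := by
    ext u; cases x <;> cases y <;> simp [IsFactor] at * <;> aesop
  rw [signedFactorCount_cons, this, finsum_mem_singleton]
  cases x <;> simp_all [factorSign]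

theorem signedFactorCount_singleton (x : ABC) : signedFactorCount [x] = 1 := by
  have : {u | IsFactor u ∧ u <+: [x]} = {[x]} := by
    ext u; cases x <;> simp [IsFactor] at * <;> aesop
  rw [signedFactorCount_cons, this, finsum_mem_singleton]
  cases x <;> simp [factorSign, signedFactorCount_nil]

-- the words of `a* {b, c}*`
abbrev IsNormal (w : List ABC) : Prop :=
  w.Pairwise fun x y => y = a → x = a

theorem signedFactorCount_eq_ite (w : List ABC) :
    signedFactorCount w = if IsNormal w then 1 else 0 := by
  induction w with
  | nil => simp [signedFactorCount_nil, IsNormal]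
  | cons x t ih =>
    by_cases hx : x = a
    · subst hx
      simp [signedFactorCount_a_cons, ih, IsNormal]
    rcases t with _ | ⟨y, t⟩
    · simp [signedFactorCount_singleton, IsNormal]
    by_cases hy : y = a
    · subst hy
      simp [signedFactorCount_cons_a_cons hx, IsNormal, hx]
    · rw [signedFactorCount_cons_of_ne hx hy, ih]
      simp [IsNormal, hx, hy]

def normalForm (w : List ABC) : List ABC :=
  w.filter (· = a) ++ w.filter (· ≠ a)

theorem isNormal_normalForm (w : List ABC) : IsNormal (normalForm w) := by
  simp only [IsNormal, normalForm, List.pairwise_append, List.pairwise_filter, List.mem_filter]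
  refine ⟨List.pairwise_of_forall ?_, List.pairwise_of_forall ?_, ?_⟩ <;> simp_all

theorem IsNormal.normalForm_eq {w : List ABC} (hw : IsNormal w) : normalForm w = w := by
  induction w with
  | nil => rfl
  | cons x t ih =>
    rw [IsNormal, List.pairwise_cons] at hw
    by_cases hx : x = a
    · subst hx
      simpa [normalForm] using ih hw.2
    · have ht : ∀ y ∈ t, y ≠ a := fun y hy hya => hx (hw.1 y hy hya)
      have h₁ : t.filter (· = a) = [] := List.filter_eq_nil_iff.2 (by simpa using ht)
      have h₂ : t.filter (· ≠ a) = t := List.filter_eq_self.2 (by simpa using ht)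
      simp only [normalForm, List.filter_cons, hx, h₁, h₂]
      simp [hx]

theorem normalForm_eq_of_commStep {v w : List ABC} (h : CommStep v w) :
    normalForm v = normalForm w := by
  cases h <;> simp [normalForm]

theorem traceEquiv.normalForm_eq {v w : List ABC} (h : traceEquiv v w) :
    normalForm v = normalForm w :=
  congrArg (Quot.lift normalForm fun _ _ => normalForm_eq_of_commStep) (Quot.eqvGen_sound h)

theorem traceEquiv.cons (x : ABC) {v w : List ABC} (h : traceEquiv v w) :
    traceEquiv (x :: v) (x :: w) :=
  h.map (x :: ·) fun _ _ h => by
    cases h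
    exacts [.swap_ab (x :: _) _, .swap_ac (x :: _) _]

theorem traceEquiv_a_cons_cons {x : ABC} (hx : x ≠ a) (s : List ABC) :
    traceEquiv (a :: x :: s) (x :: a :: s) := by
  refine .rel _ _ ?_
  cases x
  exacts [absurd rfl hx, .swap_ab [] s, .swap_ac [] s]

theorem traceEquiv_append_cons {x : ABC} (hx : x ≠ a) {A : List ABC} (hA : ∀ y ∈ A, y = a)
    (s : List ABC) : traceEquiv (A ++ x :: s) (x :: (A ++ s)) := by
  induction A with
  | nil => exact .refl _
  | cons y A ih =>
    obtain rfl : y = a := hA y (by simp)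
    exact .trans _ _ _ ((ih fun z hz => hA z (by simp [hz])).cons a) (traceEquiv_a_cons_cons hx _)

theorem traceEquiv_normalForm (w : List ABC) : traceEquiv (normalForm w) w := by
  induction w with
  | nil => exact .refl _
  | cons x t ih =>
    by_cases hx : x = a
    · subst hx
      simpa [normalForm] using ih.cons a
    · have hnf : normalForm (x :: t) = t.filter (· = a) ++ x :: t.filter (· ≠ a) := by
        simp [normalForm, hx]
      rw [hnf]
      exact .trans _ _ _ (traceEquiv_append_cons hx (by simp) _) (ih.cons x)

/-- Cartier–Foata theorem for `{a,b,c}` with `a` commuting with `b` and `c`: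
`N(w) ∈ {0, 1}` for all `w`, and every trace class contains exactly one word `w`
with `N(w) = 1`. -/
theorem cartier_foata_abc :
    (∀ w : List ABC, signedFactorCount w = 0 ∨ signedFactorCount w = 1) ∧
    (∀ w : List ABC, ∃! v : List ABC, traceEquiv v w ∧ signedFactorCount v = 1) := by
  refine ⟨fun w => ?_, fun w => ⟨normalForm w, ⟨traceEquiv_normalForm w, ?_⟩, ?_⟩⟩
  · rw [signedFactorCount_eq_ite]
    split_ifs <;> simp
  · rw [signedFactorCount_eq_ite, if_pos (isNormal_normalForm w)]
  · rintro v ⟨hvw, hv⟩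
    have hnormal : IsNormal v := by
      by_contra h
      simp [signedFactorCount_eq_ite, h] at hv
    rw [← hnormal.normalForm_eq, hvw.normalForm_eq]
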